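/- Let X be a compact topological space, A ⊆ X a closed subset, and E a Banach space. Then the restriction map from C(X, E) to C(A, E) admits a continuous linear section, i.e., there is a continuous linear map s : C(A, E) → C(X, E) with (s g)|_A = g for all g ∈ C(A, E), provided X is a compact metric space. -/

import Mathlib

/-!
Dugundji's construction. Cover `Aᶜ` by the balls `B(c, d(c, A)/4)`, take a partition of unity
`(φ_c)` subordinate to it and pick for each `c` a point `p_c ∈ A` with `d(c, p_c) < 2 d(c, A)`.
Then `Eg := g` on `A` and `Eg := ∑ φ_c • g(p_c)` off `A` is linear in `g`, takes its values in the
convex hull of the range of `g` (so `‖Eg‖ ≤ ‖g‖`), and is continuous at the points of `A`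
because every `p_c` used at `y` is within `4 d(y, a)` of any `a ∈ A`.
-/

open Metric Set Function

section

variable {X : Type*} [MetricSpace X]

structure DugundjiCover (A : Set X) where
  weight : PartitionOfUnity (↥Aᶜ) (↥Aᶜ) univ
  anchor : ↥Aᶜ → A
  dist_anchor_le : ∀ c y, weight c y ≠ 0 → ∀ a ∈ A, dist (anchor c : X) a ≤ 4 * dist (y : X) a

theorem nonempty_dugundjiCover {A : Set X} (hA : IsClosed A) (hne : A.Nonempty) :
    Nonempty (DugundjiCover A) := by
  have hpos : ∀ c : ↥Aᶜ, 0 < infDist (c : X) A := fun c => (hA.notMem_iff_infDist_pos hne).1 c.2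
  choose p hpA hp using fun c : ↥Aᶜ =>
    (infDist_lt_iff hne).1 (lt_two_mul_self (hpos c))
  obtain ⟨ρ, hρ⟩ := PartitionOfUnity.exists_isSubordinate isClosed_univ
    (fun c : ↥Aᶜ => Subtype.val ⁻¹' ball (c : X) (infDist (c : X) A / 4))
    (fun c => isOpen_ball.preimage continuous_subtype_val)
    (fun y _ => mem_iUnion.2 ⟨y, by simpa using hpos y⟩)
  refine ⟨⟨ρ, fun c => ⟨p c, hpA c⟩, fun c y hw a ha => ?_⟩⟩
  have hcy : dist (c : X) y < infDist (c : X) A / 4 := by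
    rw [dist_comm]; exact hρ c (subset_tsupport _ hw)
  have hcp : dist (p c) c < 2 * infDist (c : X) A := by
    rw [dist_comm]; exact hp c
  have hca : infDist (c : X) A ≤ dist (c : X) a := infDist_le_dist_of_mem ha
  have := dist_triangle (c : X) y a
  have := dist_triangle4 (p c) c y a
  change dist (p c) a ≤ 4 * dist (y : X) a
  linarith

end

namespace DugundjiCover

variable {X : Type*} [MetricSpace X] {A : Set X} (D : DugundjiCover A)
  {E : Type*} [NormedAddCommGroup E] [NormedSpace ℝ E]

open Classical in
noncomputable def extend (g : A → E) (x : X) : E :=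
  if hx : x ∈ A then g ⟨x, hx⟩ else ∑ᶠ c, D.weight c ⟨x, hx⟩ • g (D.anchor c)

theorem extend_of_mem (g : A → E) {x : X} (hx : x ∈ A) : D.extend g x = g ⟨x, hx⟩ := dif_pos hx

theorem extend_of_notMem (g : A → E) {x : X} (hx : x ∉ A) :
    D.extend g x = ∑ᶠ c, D.weight c ⟨x, hx⟩ • g (D.anchor c) := dif_neg hx

theorem extend_mem_of_forall_mem {g : A → E} {t : Set E} (ht : Convex ℝ t) (hg : ∀ a, g a ∈ t)
    (x : X) : D.extend g x ∈ t := by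
  by_cases hx : x ∈ A
  · rw [D.extend_of_mem g hx]; exact hg _
  · rw [D.extend_of_notMem g hx]
    exact D.weight.finsum_smul_mem_convex (g := fun c _ => g (D.anchor c)) (mem_univ _)
      (fun c _ => hg _) ht

theorem extend_mem_of_forall_dist_lt {g : A → E} {t : Set E} (ht : Convex ℝ t) {a : X}
    (ha : a ∈ A) {δ : ℝ} (hg : ∀ b : A, dist (b : X) a < δ → g b ∈ t) {x : X}
    (hx : dist x a < δ / 4) : D.extend g x ∈ t := by
  by_cases hxA : x ∈ A
  · rw [D.extend_of_mem g hxA]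
    exact hg _ (by linarith [dist_nonneg (x := x) (y := a)])
  · rw [D.extend_of_notMem g hxA]
    refine D.weight.finsum_smul_mem_convex (g := fun c _ => g (D.anchor c)) (mem_univ _)
      (fun c hc => hg _ ?_) ht
    linarith [D.dist_anchor_le c ⟨x, hxA⟩ hc a ha]

theorem continuous_extend (hA : IsClosed A) {g : A → E} (hg : Continuous g) :
    Continuous (D.extend g) := by
  refine continuous_iff_continuousAt.2 fun x => ?_
  by_cases hx : x ∈ A
  · refine continuousAt_iff'.2 fun ε hε => ?_
    obtain ⟨δ, hδ, hgδ⟩ := continuousAt_iff.1 hg.continuousAt ε hε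
    filter_upwards [ball_mem_nhds x (div_pos hδ four_pos)] with z hz
    rw [D.extend_of_mem g hx]
    exact D.extend_mem_of_forall_dist_lt (convex_ball _ ε) hx (fun b hb => hgδ hb) hz
  · have hcont : Continuous fun y : ↥Aᶜ => ∑ᶠ c, D.weight c y • g (D.anchor c) :=
      D.weight.continuous_finsum_smul fun c y _ => continuousAt_const
    have hcontOn : ContinuousOn (D.extend g) Aᶜ := by
      rw [continuousOn_iff_continuous_domRestrict]
      exact hcont.congr fun y => (D.extend_of_notMem g y.2).symm
    exact hcontOn.continuousAt (hA.isOpen_compl.mem_nhds hx)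

theorem extend_add (g h : A → E) : D.extend (g + h) = D.extend g + D.extend h := by
  funext x
  by_cases hx : x ∈ A
  · simp only [D.extend_of_mem _ hx, Pi.add_apply]
  · have hfin := D.weight.locallyFinite.point_finite ⟨x, hx⟩
    simp only [D.extend_of_notMem _ hx, Pi.add_apply, smul_add]
    exact finsum_add_distrib (hfin.subset (support_smul_subset_left _ _))
      (hfin.subset (support_smul_subset_left _ _))

theorem extend_smul (r : ℝ) (g : A → E) : D.extend (r • g) = r • D.extend g := by
  funext x
  by_cases hx : x ∈ A
  · simp only [D.extend_of_mem _ hx, Pi.smul_apply]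
  · have hfin := D.weight.locallyFinite.point_finite ⟨x, hx⟩
    simp only [D.extend_of_notMem _ hx, Pi.smul_apply, smul_comm _ r]
    exact (smul_finsum' r (hfin.subset (support_smul_subset_left _ _))).symm

variable [CompactSpace X] [CompactSpace A]

noncomputable def extensionCLM : C(A, E) →L[ℝ] C(X, E) :=
  LinearMap.mkContinuous
    { toFun := fun g =>
        ⟨D.extend g, D.continuous_extend (isCompact_iff_compactSpace.2 ‹_›).isClosed g.continuous⟩
      map_add' := fun g h => ContinuousMap.ext (congrFun (D.extend_add g h))
      map_smul' := fun r g => ContinuousMap.ext (congrFun (D.extend_smul r g)) } 1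
    fun g => by
      rw [one_mul]
      refine (ContinuousMap.norm_le _ (norm_nonneg g)).2 fun x => ?_
      simpa using D.extend_mem_of_forall_mem (convex_closedBall (0 : E) ‖g‖)
        (fun a => mem_closedBall_zero_iff.2 (g.norm_coe_le_norm a)) x

theorem extensionCLM_apply_coe (g : C(A, E)) (a : A) : D.extensionCLM g a = g a :=
  D.extend_of_mem g a.2

end DugundjiCover

theorem exists_continuous_linear_extension_operator_general
    {X : Type*} [MetricSpace X] [CompactSpace X] (A : Set X) (hA : IsClosed A)
    (E : Type*) [NormedAddCommGroup E] [NormedSpace ℝ E] :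
    ∃ s : C(A, E) →L[ℝ] C(X, E), ∀ g : C(A, E), ∀ a : A, s g (a : X) = g a := by
  rcases A.eq_empty_or_nonempty with rfl | hne
  · exact ⟨0, fun _ a => a.2.elim⟩
  · have : CompactSpace A := isCompact_iff_compactSpace.mp hA.isCompact
    obtain ⟨D⟩ := nonempty_dugundjiCover hA hne
    exact ⟨D.extensionCLM, D.extensionCLM_apply_coe⟩

/-- Linear Tietze/Dugundji extension: for a compact metric space `X`, a closed
subset `A ⊆ X` and a Banach space `E`, the restriction map `C(X,E) → C(A,E)`
admits a continuous linear section. -/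
theorem exists_continuous_linear_extension_operator
    {X : Type*} [MetricSpace X] [CompactSpace X] (A : Set X) (hA : IsClosed A)
    (E : Type*) [NormedAddCommGroup E] [NormedSpace ℝ E] [CompleteSpace E] :
    ∃ s : C(A, E) →L[ℝ] C(X, E), ∀ g : C(A, E), ∀ a : A, s g (a : X) = g a :=
  exists_continuous_linear_extension_operator_general A hA E
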